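/- For the cycle C_n with n ≥ 4 vertices, tpc(C_n) = 3 (and tpc(C_3) = 1). -/

import Mathlib

open SimpleGraph

variable {V : Type*} {α : Type*}

/-- A walk in a total-colored graph (vertex coloring `cv`, edge coloring `ce`) is a
*total proper* walk if (i) any two adjacent edges on it differ in color, (ii) any two
internal adjacent vertices on it differ in color, and (iii) any internal vertex differs
in color from its incident edges on the walk. -/
def IsTotalProperWalk {G : SimpleGraph V} (cv : V → α) (ce : Sym2 V → α)
    {u v : V} (w : G.Walk u v) : Prop :=
  (∀ i : ℕ, i + 1 < w.length →
      ce (w.edges.getD i s(u, u)) ≠ ce (w.edges.getD (i + 1) s(u, u))) ∧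
  (∀ i : ℕ, 1 ≤ i → i + 1 < w.length →
      cv (w.support.getD i u) ≠ cv (w.support.getD (i + 1) u)) ∧
  (∀ i : ℕ, 1 ≤ i → i < w.length →
      cv (w.support.getD i u) ≠ ce (w.edges.getD (i - 1) s(u, u)) ∧
      cv (w.support.getD i u) ≠ ce (w.edges.getD i s(u, u)))

/-- A total-colored graph is total proper connected if any two vertices are joined by a
total proper path. -/
def TotalProperConnected (G : SimpleGraph V) (cv : V → α) (ce : Sym2 V → α) : Prop :=
  ∀ u v : V, ∃ w : G.Walk u v, w.IsPath ∧ IsTotalProperWalk cv ce w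

/-- The total proper connection number: the smallest number of colors in a total coloring
making the graph total proper connected. -/
noncomputable def tpc (G : SimpleGraph V) : ℕ :=
  sInf {k | ∃ (cv : V → Fin k) (ce : Sym2 V → Fin k), TotalProperConnected G cv ce}

/-!
Colour vertex `x` of `C_n` with `2x` and the edge `{x, x + 1}` with `2x + 1`, modulo 3. Along a
monotone stretch of the Hamiltonian path `0, 1, …, n - 1`, the colours read in the order vertex,
edge, vertex, … are consecutive integers mod 3, so any two of them at distance one or two differ;
these are the only pairs total properness compares, so three colours suffice. Conversely, for
`n ≥ 4` the vertices `0` and `2` are distinct and non-adjacent, so a path joining them has an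
internal vertex which must differ in colour from its two path edges, and these from each other.
`C_3` is complete, and paths of length at most one impose no condition.
-/

namespace SimpleGraph.Walk

variable {G : SimpleGraph V}

lemma support_getD_eq_getVert {u v : V} (w : G.Walk u v) {i : ℕ} (hi : i ≤ w.length) (d : V) :
    w.support.getD i d = w.getVert i := by
  rw [List.getD_eq_getElem _ _ (by simp; omega), support_getElem_eq_getVert]

lemma edges_getD_eq_getVert {u v : V} (w : G.Walk u v) {i : ℕ} (hi : i < w.length)
    (d : Sym2 V) : w.edges.getD i d = s(w.getVert i, w.getVert (i + 1)) := by
  rw [List.getD_eq_getElem _ _ (by simpa using hi), getElem_edges]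

lemma two_le_length_of_not_adj {u v : V} (huv : u ≠ v) (hadj : ¬G.Adj u v) (w : G.Walk u v) :
    2 ≤ w.length := by
  match w with
  | nil => exact absurd rfl huv
  | cons h nil => exact absurd h hadj
  | cons _ (cons _ _) => simp

def ofFun (f : ℕ → V) : (k : ℕ) → (∀ i < k, G.Adj (f i) (f (i + 1))) → G.Walk (f 0) (f k)
  | 0, _ => nil
  | k + 1, h => cons (h 0 k.succ_pos)
      (ofFun (fun i => f (i + 1)) k fun i hi => h (i + 1) (by omega))

variable (f : ℕ → V) (k : ℕ) (h : ∀ i < k, G.Adj (f i) (f (i + 1)))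

@[simp]
lemma length_ofFun : (ofFun f k h).length = k := by
  induction k generalizing f with
  | zero => rfl
  | succ k ih => simp [ofFun, ih]

lemma getVert_ofFun {i : ℕ} (hi : i ≤ k) : (ofFun f k h).getVert i = f i := by
  induction k generalizing f i with
  | zero => simp [ofFun, Nat.le_zero.mp hi]
  | succ k ih =>
    cases i with
    | zero => simp
    | succ i => exact ih _ _ (by omega)

lemma isPath_ofFun (hf : Set.InjOn f {i | i ≤ k}) : (ofFun f k h).IsPath := by
  rw [← IsPath.getVert_injOn_iff]
  intro i hi j hj hij
  simp only [length_ofFun, Set.mem_ofPred_eq] at hi hj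
  rw [getVert_ofFun f k h hi, getVert_ofFun f k h hj] at hij
  exact hf hi hj hij

end SimpleGraph.Walk

section TotalProper

variable {G H : SimpleGraph V}

lemma isTotalProperWalk_of_length_le_one (cv : V → α) (ce : Sym2 V → α) {u v : V}
    (w : G.Walk u v) (hw : w.length ≤ 1) : IsTotalProperWalk cv ce w :=
  ⟨fun _ _ => by omega, fun _ _ _ => by omega, fun _ _ _ => by omega⟩

lemma isTotalProperWalk_of_colorSeq {cv : V → α} {ce : Sym2 V → α} {u v : V} {w : G.Walk u v}
    (c : ℕ → α) (hv : ∀ i ≤ w.length, cv (w.getVert i) = c (2 * i))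
    (he : ∀ i < w.length, ce s(w.getVert i, w.getVert (i + 1)) = c (2 * i + 1))
    (hc : ∀ j, j + 2 ≤ 2 * w.length → c j ≠ c (j + 1) ∧ c j ≠ c (j + 2)) :
    IsTotalProperWalk cv ce w := by
  refine ⟨fun i hi => ?_, fun i _ hi => ?_, fun i hi₁ hi => ⟨?_, ?_⟩⟩
  · rw [w.edges_getD_eq_getVert (by omega), w.edges_getD_eq_getVert hi, he i (by omega), he _ hi]
    exact (hc (2 * i + 1) (by omega)).2
  · rw [w.support_getD_eq_getVert (by omega), w.support_getD_eq_getVert (by omega),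
      hv i (by omega), hv _ (by omega)]
    exact (hc (2 * i) (by omega)).2
  · rw [w.support_getD_eq_getVert hi.le, w.edges_getD_eq_getVert (by omega), hv i hi.le,
      he _ (by omega), show 2 * i = 2 * (i - 1) + 1 + 1 by omega]
    exact (hc _ (by omega)).1.symm
  · rw [w.support_getD_eq_getVert hi.le, w.edges_getD_eq_getVert hi, hv i hi.le, he i hi]
    exact (hc _ (by omega)).1

lemma IsTotalProperWalk.mapLe {cv : V → α} {ce : Sym2 V → α} {u v : V} {w : G.Walk u v}
    (hw : IsTotalProperWalk cv ce w) (hGH : G ≤ H) : IsTotalProperWalk cv ce (w.mapLe hGH) := by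
  simpa only [IsTotalProperWalk, Walk.length_mapLe, Walk.support_mapLe_eq_support,
    Walk.edges_mapLe_eq_edges] using hw

lemma TotalProperConnected.mono {cv : V → α} {ce : Sym2 V → α}
    (h : TotalProperConnected G cv ce) (hGH : G ≤ H) : TotalProperConnected H cv ce := by
  intro u v
  obtain ⟨w, hp, hw⟩ := h u v
  exact ⟨w.mapLe hGH, hp.mapLe hGH, hw.mapLe hGH⟩

lemma IsTotalProperWalk.two_lt_card [Fintype α] {cv : V → α} {ce : Sym2 V → α} {u v : V}
    {w : G.Walk u v} (hw : IsTotalProperWalk cv ce w) (hlen : 2 ≤ w.length) :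
    2 < Fintype.card α :=
  Fintype.two_lt_card_iff.mpr ⟨_, _, _, hw.1 0 hlen, ((hw.2.2 1 le_rfl hlen).1).symm,
    ((hw.2.2 1 le_rfl hlen).2).symm⟩

lemma TotalProperConnected.two_lt_card [Fintype α] {cv : V → α} {ce : Sym2 V → α}
    (h : TotalProperConnected G cv ce) {u v : V} (huv : u ≠ v) (hadj : ¬G.Adj u v) :
    2 < Fintype.card α := by
  obtain ⟨w, -, hw⟩ := h u v
  exact hw.two_lt_card (w.two_le_length_of_not_adj huv hadj)

end TotalProper

lemma tpc_eq_of_forall_le {G : SimpleGraph V} {m : ℕ} (cv : V → Fin m) (ce : Sym2 V → Fin m)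
    (h : TotalProperConnected G cv ce)
    (hmin : ∀ k (cv : V → Fin k) (ce : Sym2 V → Fin k), TotalProperConnected G cv ce → m ≤ k) :
    tpc G = m :=
  le_antisymm (Nat.sInf_le ⟨cv, ce, h⟩)
    (le_csInf ⟨m, cv, ce, h⟩ fun _ ⟨cv, ce, h⟩ => hmin _ cv ce h)

lemma tpc_top [Nonempty V] : tpc (⊤ : SimpleGraph V) = 1 := by
  refine tpc_eq_of_forall_le (fun _ => 0) (fun _ => 0) (fun u v => ?_)
    fun k cv _ _ => (cv (Classical.arbitrary V)).pos
  by_cases huv : u = v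
  · subst huv
    exact ⟨.nil, .nil, isTotalProperWalk_of_length_le_one _ _ _ zero_le_one⟩
  · have hadj : (⊤ : SimpleGraph V).Adj u v := (top_adj u v).mpr huv
    exact ⟨hadj.toWalk, hadj.isPath_toWalk, isTotalProperWalk_of_length_le_one _ _ _ le_rfl⟩

namespace SimpleGraph.pathGraph

def totalVertexColoring (n : ℕ) (x : Fin n) : Fin 3 := ⟨2 * x % 3, by omega⟩

def totalEdgeColoring (n : ℕ) : Sym2 (Fin n) → Fin 3 :=
  Sym2.lift ⟨fun x y => ⟨(x + y) % 3, by omega⟩, fun x y => by simp only [Nat.add_comm]⟩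

variable {n : ℕ} {u v : Fin n}

lemma totalEdgeColoring_mk (x y : Fin n) :
    totalEdgeColoring n s(x, y) = ⟨(x + y) % 3, by omega⟩ := rfl

def descWalk (h : v ≤ u) : (pathGraph n).Walk u v :=
  (Walk.ofFun (fun i => (⟨u - i, by omega⟩ : Fin n)) (u - v)
    fun i hi => pathGraph_adj.mpr (.inr (by simp only; omega))).copy
    (Fin.ext (Nat.sub_zero _)) (Fin.ext (by simp only; omega))

@[simp]
lemma length_descWalk (h : v ≤ u) : (descWalk h).length = u - v := by
  simp [descWalk]

lemma val_getVert_descWalk (h : v ≤ u) {i : ℕ} (hi : i ≤ u - v) :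
    ((descWalk h).getVert i : ℕ) = u - i := by
  simp [descWalk, Walk.getVert_ofFun _ _ _ hi]

lemma isPath_descWalk (h : v ≤ u) : (descWalk h).IsPath := by
  rw [descWalk, Walk.isPath_copy]
  refine Walk.isPath_ofFun _ _ _ fun i hi j hj hij => ?_
  simp only [Set.mem_ofPred_eq, Fin.mk.injEq] at hi hj hij
  omega

lemma isTotalProperWalk_descWalk (h : v ≤ u) :
    IsTotalProperWalk (totalVertexColoring n) (totalEdgeColoring n) (descWalk h) := by
  refine isTotalProperWalk_of_colorSeq (fun j => ⟨(2 * u - j) % 3, by omega⟩)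
    (fun i hi => ?_) (fun i hi => ?_) (fun j hj => ?_) <;>
    simp only [length_descWalk] at *
  · simp only [totalVertexColoring, val_getVert_descWalk h hi, Fin.mk.injEq]
    omega
  · simp only [totalEdgeColoring_mk, val_getVert_descWalk h hi.le,
      val_getVert_descWalk h (Nat.succ_le_of_lt hi), Fin.mk.injEq]
    omega
  · simp only [ne_eq, Fin.mk.injEq]
    omega

lemma isTotalProperWalk_reverse_descWalk (h : v ≤ u) :
    IsTotalProperWalk (totalVertexColoring n) (totalEdgeColoring n) (descWalk h).reverse := by
  refine isTotalProperWalk_of_colorSeq (fun j => ⟨(2 * v + j) % 3, by omega⟩)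
    (fun i hi => ?_) (fun i hi => ?_) (fun j hj => ?_) <;>
    simp only [Walk.length_reverse, length_descWalk] at *
  · simp only [totalVertexColoring, Walk.getVert_reverse, length_descWalk,
      val_getVert_descWalk h (Nat.sub_le _ _), Fin.mk.injEq]
    omega
  · simp only [totalEdgeColoring_mk, Walk.getVert_reverse, length_descWalk,
      val_getVert_descWalk h (Nat.sub_le _ _), Fin.mk.injEq]
    omega
  · simp only [ne_eq, Fin.mk.injEq]
    omega

lemma totalProperConnected (n : ℕ) :
    TotalProperConnected (pathGraph n) (totalVertexColoring n) (totalEdgeColoring n) := by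
  intro u v
  rcases le_total v u with h | h
  · exact ⟨descWalk h, isPath_descWalk h, isTotalProperWalk_descWalk h⟩
  · exact ⟨(descWalk h).reverse, (isPath_descWalk h).reverse, isTotalProperWalk_reverse_descWalk h⟩

end SimpleGraph.pathGraph

lemma SimpleGraph.cycleGraph_not_adj_zero_two {n : ℕ} (hn : 4 ≤ n) :
    ¬(cycleGraph n).Adj ⟨0, by omega⟩ ⟨2, by omega⟩ := by
  rw [cycleGraph_adj', Fin.coe_sub_iff_lt.mpr (by simp), Fin.coe_sub_iff_le.mpr (by simp)]
  simp only
  omega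

lemma tpc_cycleGraph {n : ℕ} (hn : 4 ≤ n) : tpc (cycleGraph n) = 3 :=
  tpc_eq_of_forall_le _ _ ((pathGraph.totalProperConnected n).mono pathGraph_le_cycleGraph)
    fun k _ _ h => Nat.succ_le_of_lt <| by
      simpa using h.two_lt_card (by simp) (cycleGraph_not_adj_zero_two hn)

/-- For the cycle `C_n` with `n ≥ 4` vertices, `tpc (C_n) = 3`; and `tpc (C_3) = 1`. -/
theorem stmt_10 (n : ℕ) (hn : 4 ≤ n) :
    tpc (SimpleGraph.cycleGraph n) = 3 ∧ tpc (SimpleGraph.cycleGraph 3) = 1 :=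
  ⟨tpc_cycleGraph hn, cycleGraph_three_eq_top ▸ tpc_top⟩
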